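/- Let M14₋₁ be the 6-dimensional real Lie algebra with basis x₁,…,x₆ and nonzero brackets [x₁,x₃]=x₄, [x₁,x₄]=x₆, [x₂,x₃]=x₅, [x₂,x₅]=−x₆. Then there exists no linear map J : M14₋₁ → M14₋₁ with J² = −1 satisfying the Nijenhuis integrability condition [JX,JY] − [X,Y] − J[JX,Y] − J[X,JY] = 0 for all X,Y. -/

import Mathlib

/-!
`x 5` spans the centre, so the Nijenhuis condition with one central argument says that
`ad (J (x 5))` commutes with `J`. All brackets lie in `span {x 3, x 4, x 5}`, and comparing
coordinates puts `J (x 5)` in `K = span {x 2, x 3, x 4, x 5}`. If its `x 2`-coordinate vanished,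
`J (x 5)` would be a real multiple of `x 5`, impossible when `J² = -1`. Otherwise
`K = ker (ad (J (x 5)))` is `J`-invariant, and two more instances of the Nijenhuis condition show
that on `L ⧸ K` the map `J` sends `x 0 ↦ p • x 1` and `x 1 ↦ p • x 0` for some real `p`, so that
`J² = p² ≠ -1` there.
-/

open Module

section ComplexStructure

variable {R L : Type*} [CommRing R] [LieRing L] [LieAlgebra R L]

def nijenhuis (J : L →ₗ[R] L) (X Y : L) : L :=
  ⁅J X, J Y⁆ - ⁅X, Y⁆ - J ⁅J X, Y⁆ - J ⁅X, J Y⁆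

def IsComplexStructure (J : L →ₗ[R] L) : Prop :=
  (∀ X, J (J X) = -X) ∧ ∀ X Y, nijenhuis J X Y = 0

namespace IsComplexStructure

variable {J : L →ₗ[R] L}

theorem apply_lie_add_lie (hJ : IsComplexStructure J) (X Y : L) :
    J (⁅J X, Y⁆ + ⁅X, J Y⁆) = ⁅J X, J Y⁆ - ⁅X, Y⁆ := by
  rw [map_add, eq_comm, ← sub_eq_zero, ← hJ.2 X Y, nijenhuis]
  abel

theorem lie_apply_apply_of_mem_center (hJ : IsComplexStructure J) {z : L}
    (hz : z ∈ LieAlgebra.center R L) (Y : L) : ⁅J z, J Y⁆ = J ⁅J z, Y⁆ := by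
  have hzY : ∀ Y : L, ⁅z, Y⁆ = 0 := fun Y ↦ by
    rw [← lie_skew, (LieModule.mem_maxTrivSubmodule R L L z).mp hz Y, neg_zero]
  simpa [hzY] using (hJ.apply_lie_add_lie z Y).symm

end IsComplexStructure

end ComplexStructure

theorem IsComplexStructure.eq_zero_of_apply_eq_smul {K L : Type*} [Field K] [LinearOrder K]
    [IsStrictOrderedRing K] [LieRing L] [LieAlgebra K L] {J : L →ₗ[K] L}
    (hJ : IsComplexStructure J) {v : L} {c : K} (hv : J v = c • v) : v = 0 := by
  have h : (c * c + 1) • v = 0 := by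
    have := hJ.1 v
    rw [hv, map_smul, hv, smul_smul] at this
    rw [add_smul, one_smul, this, neg_add_cancel]
  have hc : 0 < c * c + 1 := by linarith [mul_self_nonneg c]
  exact (smul_eq_zero.mp h).resolve_left hc.ne'

section M14

variable {L : Type*} [LieRing L] [LieAlgebra ℝ L]

/-- The bracket of `M14₋₁` in the coordinates of `x`, where `x i` is the paper's `x_{i+1}`. -/
def IsM14neg1Basis (x : Basis (Fin 6) ℝ L) : Prop :=
  ∀ u v : L, ⁅u, v⁆ =
    (x.coord 0 u * x.coord 2 v - x.coord 2 u * x.coord 0 v) • x 3 +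
    (x.coord 1 u * x.coord 2 v - x.coord 2 u * x.coord 1 v) • x 4 +
    (x.coord 0 u * x.coord 3 v - x.coord 3 u * x.coord 0 v
      - x.coord 1 u * x.coord 4 v + x.coord 4 u * x.coord 1 v) • x 5

theorem isM14neg1Basis_of_lie (x : Basis (Fin 6) ℝ L)
    (h02 : ⁅x 0, x 2⁆ = x 3) (h03 : ⁅x 0, x 3⁆ = x 5)
    (h12 : ⁅x 1, x 2⁆ = x 4) (h14 : ⁅x 1, x 4⁆ = -x 5)
    (h01 : ⁅x 0, x 1⁆ = 0) (h04 : ⁅x 0, x 4⁆ = 0) (h05 : ⁅x 0, x 5⁆ = 0)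
    (h13 : ⁅x 1, x 3⁆ = 0) (h15 : ⁅x 1, x 5⁆ = 0)
    (h23 : ⁅x 2, x 3⁆ = 0) (h24 : ⁅x 2, x 4⁆ = 0) (h25 : ⁅x 2, x 5⁆ = 0)
    (h34 : ⁅x 3, x 4⁆ = 0) (h35 : ⁅x 3, x 5⁆ = 0) (h45 : ⁅x 4, x 5⁆ = 0) :
    IsM14neg1Basis x := by
  have skew {i j : Fin 6} {v : L} (h : ⁅x i, x j⁆ = v) : ⁅x j, x i⁆ = -v := by
    rw [← lie_skew, h]
  intro u v
  conv_lhs => rw [← x.sum_repr u, ← x.sum_repr v]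
  simp only [Fin.sum_univ_six, add_lie, lie_add, smul_lie, lie_smul, lie_self, h01, h02, h03,
    h04, h05, h12, h13, h14, h15, h23, h24, h25, h34, h35, h45, skew h01, skew h02, skew h03,
    skew h04, skew h05, skew h12, skew h13, skew h14, skew h15, skew h23, skew h24, skew h25,
    skew h34, skew h35, skew h45, Basis.coord_apply]
  module

namespace IsM14neg1Basis

variable {x : Basis (Fin 6) ℝ L}

theorem coord_lie_of_le_two (hx : IsM14neg1Basis x) (u v : L) {i : Fin 6} (hi : i ≤ 2) :
    x.coord i ⁅u, v⁆ = 0 := by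
  rw [hx]
  fin_cases i <;> simp_all

theorem coord_lie_three (hx : IsM14neg1Basis x) (u v : L) :
    x.coord 3 ⁅u, v⁆ = x.coord 0 u * x.coord 2 v - x.coord 2 u * x.coord 0 v := by
  simp [hx u v]

theorem coord_lie_four (hx : IsM14neg1Basis x) (u v : L) :
    x.coord 4 ⁅u, v⁆ = x.coord 1 u * x.coord 2 v - x.coord 2 u * x.coord 1 v := by
  simp [hx u v]

theorem lie_basis_zero (hx : IsM14neg1Basis x) (u : L) :
    ⁅u, x 0⁆ = -(x.coord 2 u • x 3 + x.coord 3 u • x 5) := by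
  rw [hx]; simp; module

theorem lie_basis_one (hx : IsM14neg1Basis x) (u : L) :
    ⁅u, x 1⁆ = -(x.coord 2 u • x 4) + x.coord 4 u • x 5 := by
  rw [hx]; simp

theorem lie_basis_two (hx : IsM14neg1Basis x) (u : L) :
    ⁅u, x 2⁆ = x.coord 0 u • x 3 + x.coord 1 u • x 4 := by
  rw [hx]; simp

theorem lie_basis_three (hx : IsM14neg1Basis x) (u : L) : ⁅u, x 3⁆ = x.coord 0 u • x 5 := by
  rw [hx]; simp

theorem lie_basis_four (hx : IsM14neg1Basis x) (u : L) : ⁅u, x 4⁆ = -(x.coord 1 u • x 5) := by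
  rw [hx]; simp

theorem basis_five_mem_center (hx : IsM14neg1Basis x) : x 5 ∈ LieAlgebra.center ℝ L :=
  (LieModule.mem_maxTrivSubmodule ℝ L L _).mpr fun u ↦ by rw [hx]; simp

variable {J : L →ₗ[ℝ] L}

theorem coord_apply_basis_five_zero (hx : IsM14neg1Basis x) (hJ : IsComplexStructure J) :
    x.coord 0 (J (x 5)) = 0 := by
  have h := congrArg (x.coord 0)
    (hJ.lie_apply_apply_of_mem_center hx.basis_five_mem_center (x 3))
  simp (disch := decide) only [hx.lie_basis_three, hx.coord_lie_of_le_two, map_smul,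
    smul_eq_mul] at h
  exact mul_self_eq_zero.mp h.symm

theorem coord_apply_basis_five_one (hx : IsM14neg1Basis x) (hJ : IsComplexStructure J) :
    x.coord 1 (J (x 5)) = 0 := by
  have h := congrArg (x.coord 1)
    (hJ.lie_apply_apply_of_mem_center hx.basis_five_mem_center (x 4))
  simp (disch := decide) only [hx.lie_basis_four, hx.coord_lie_of_le_two, map_neg, map_smul,
    smul_eq_mul] at h
  exact mul_self_eq_zero.mp (neg_eq_zero.mp h.symm)

theorem lie_apply_basis_five_apply_basis_zero (hx : IsM14neg1Basis x)
    (hJ : IsComplexStructure J) : ⁅J (x 5), J (x 0)⁆ =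
      -(x.coord 2 (J (x 5)) • J (x 3) + x.coord 3 (J (x 5)) • J (x 5)) := by
  rw [hJ.lie_apply_apply_of_mem_center hx.basis_five_mem_center, hx.lie_basis_zero]
  simp only [map_neg, map_add, map_smul]

theorem lie_apply_basis_five_apply_basis_one (hx : IsM14neg1Basis x)
    (hJ : IsComplexStructure J) : ⁅J (x 5), J (x 1)⁆ =
      -(x.coord 2 (J (x 5)) • J (x 4)) + x.coord 4 (J (x 5)) • J (x 5) := by
  rw [hJ.lie_apply_apply_of_mem_center hx.basis_five_mem_center, hx.lie_basis_one]
  simp only [map_neg, map_add, map_smul]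

theorem coord_apply_basis_five_two_ne_zero (hx : IsM14neg1Basis x)
    (hJ : IsComplexStructure J) : x.coord 2 (J (x 5)) ≠ 0 := by
  intro h2
  have h0 := hx.coord_apply_basis_five_zero hJ
  have h1 := hx.coord_apply_basis_five_one hJ
  have h3 := congrArg (x.coord 3) (hx.lie_apply_basis_five_apply_basis_zero hJ)
  have h4 := congrArg (x.coord 4) (hx.lie_apply_basis_five_apply_basis_one hJ)
  simp only [hx.coord_lie_three, hx.coord_lie_four, h0, h1, h2, map_add, map_neg, map_smul,
    smul_eq_mul] at h3 h4
  have h3' : x.coord 3 (J (x 5)) = 0 := mul_self_eq_zero.mp (by linear_combination h3)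
  have h4' : x.coord 4 (J (x 5)) = 0 := mul_self_eq_zero.mp (by linear_combination -h4)
  refine x.ne_zero 5 (hJ.eq_zero_of_apply_eq_smul (c := x.coord 5 (J (x 5))) ?_)
  conv_lhs => rw [← x.sum_repr (J (x 5)), Fin.sum_univ_six]
  simp only [← Basis.coord_apply, h0, h1, h2, h3', h4', zero_smul, zero_add]

theorem coord_apply_zero_of_lie_eq_zero (hx : IsM14neg1Basis x) (hJ : IsComplexStructure J)
    (h2 : x.coord 2 (J (x 5)) ≠ 0) {Y : L} (hY : ⁅J (x 5), Y⁆ = 0) : x.coord 0 (J Y) = 0 := by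
  have h := congrArg (x.coord 3)
    (hJ.lie_apply_apply_of_mem_center hx.basis_five_mem_center Y)
  rw [hY, map_zero, map_zero, hx.coord_lie_three, hx.coord_apply_basis_five_zero hJ] at h
  exact (mul_eq_zero.mp (by linear_combination -h)).resolve_left h2

theorem coord_apply_basis_three_two (hx : IsM14neg1Basis x) (hJ : IsComplexStructure J)
    (h2 : x.coord 2 (J (x 5)) ≠ 0) : x.coord 2 (J (x 3)) = -x.coord 3 (J (x 5)) := by
  have h := congrArg (x.coord 2) (hx.lie_apply_basis_five_apply_basis_zero hJ)
  simp (disch := decide) only [hx.coord_lie_of_le_two, map_add, map_neg, map_smul,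
    smul_eq_mul] at h
  have h' : x.coord 2 (J (x 5)) * (x.coord 2 (J (x 3)) + x.coord 3 (J (x 5))) = 0 := by
    linear_combination h
  exact eq_neg_of_add_eq_zero_left ((mul_eq_zero.mp h').resolve_left h2)

theorem coord_apply_basis_four_two (hx : IsM14neg1Basis x) (hJ : IsComplexStructure J)
    (h2 : x.coord 2 (J (x 5)) ≠ 0) : x.coord 2 (J (x 4)) = x.coord 4 (J (x 5)) := by
  have h := congrArg (x.coord 2) (hx.lie_apply_basis_five_apply_basis_one hJ)
  simp (disch := decide) only [hx.coord_lie_of_le_two, map_add, map_neg, map_smul,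
    smul_eq_mul] at h
  have h' : x.coord 2 (J (x 5)) * (x.coord 2 (J (x 4)) - x.coord 4 (J (x 5))) = 0 := by
    linear_combination h
  exact sub_eq_zero.mp ((mul_eq_zero.mp h').resolve_left h2)

theorem coord_apply_basis_zero_zero (hx : IsM14neg1Basis x) (hJ : IsComplexStructure J)
    (h2 : x.coord 2 (J (x 5)) ≠ 0) : x.coord 0 (J (x 0)) = 0 := by
  have hN := congrArg (x.coord 2) (hJ.apply_lie_add_lie (x 3) (x 0))
  rw [← lie_skew (x 3), hx.lie_basis_zero, hx.lie_basis_three] at hN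
  simp (disch := decide) only [hx.coord_lie_of_le_two, map_sub, map_add, map_neg, map_smul,
    smul_eq_mul] at hN
  have hw := congrArg (x.coord 3) (hx.lie_apply_basis_five_apply_basis_zero hJ)
  simp only [hx.coord_lie_three, map_add, map_neg, map_smul, smul_eq_mul] at hw
  have hJ3 := hx.coord_apply_basis_three_two hJ h2
  have hJ5 := hx.coord_apply_basis_five_zero hJ
  have h : x.coord 2 (J (x 5)) * (2 * x.coord 0 (J (x 0))) = 0 := by
    linear_combination -hN - hw - (x.coord 2 (J (x 3)) - x.coord 3 (J (x 5))) * hJ3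
      + x.coord 2 (J (x 0)) * hJ5
  exact (mul_eq_zero.mp ((mul_eq_zero.mp h).resolve_left h2)).resolve_left two_ne_zero

theorem coord_apply_basis_one_zero (hx : IsM14neg1Basis x) (hJ : IsComplexStructure J)
    (h2 : x.coord 2 (J (x 5)) ≠ 0) : x.coord 0 (J (x 1)) = x.coord 1 (J (x 0)) := by
  have hN := congrArg (x.coord 2) (hJ.apply_lie_add_lie (x 3) (x 1))
  rw [← lie_skew (x 3), hx.lie_basis_one, hx.lie_basis_three] at hN
  simp (disch := decide) only [hx.coord_lie_of_le_two, map_sub, map_add, map_neg, map_smul,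
    smul_eq_mul] at hN
  have hw := congrArg (x.coord 4) (hx.lie_apply_basis_five_apply_basis_zero hJ)
  simp only [hx.coord_lie_four, map_add, map_neg, map_smul, smul_eq_mul] at hw
  have hJ3 := hx.coord_apply_basis_three_two hJ h2
  have hJ4 := hx.coord_apply_basis_four_two hJ h2
  have hJ5 := hx.coord_apply_basis_five_one hJ
  have h : x.coord 2 (J (x 5)) * (x.coord 0 (J (x 1)) - x.coord 1 (J (x 0))) = 0 := by
    linear_combination -hN + hw - x.coord 2 (J (x 4)) * hJ3 + x.coord 3 (J (x 5)) * hJ4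
      - x.coord 2 (J (x 0)) * hJ5
  exact sub_eq_zero.mp ((mul_eq_zero.mp h).resolve_left h2)

theorem coord_apply_basis_five_two_eq_zero (hx : IsM14neg1Basis x)
    (hJ : IsComplexStructure J) : x.coord 2 (J (x 5)) = 0 := by
  by_contra h2
  have h0 := hx.coord_apply_basis_five_zero hJ
  have h1 := hx.coord_apply_basis_five_one hJ
  have hJ2 := hx.coord_apply_zero_of_lie_eq_zero hJ h2 (Y := x 2)
    (by simp [hx.lie_basis_two, h0, h1])
  have hJ3 := hx.coord_apply_zero_of_lie_eq_zero hJ h2 (Y := x 3)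
    (by simp [hx.lie_basis_three, h0])
  have hJ4 := hx.coord_apply_zero_of_lie_eq_zero hJ h2 (Y := x 4)
    (by simp [hx.lie_basis_four, h1])
  have hJJ : x.coord 0 (J (J (x 0))) = -1 := by simp [hJ.1]
  rw [← x.sum_repr (J (x 0))] at hJJ
  simp only [map_add, map_smul, smul_eq_mul, Fin.sum_univ_six, ← Basis.coord_apply, h0, hJ2,
    hJ3, hJ4, hx.coord_apply_basis_zero_zero hJ h2, hx.coord_apply_basis_one_zero hJ h2,
    mul_zero, add_zero, zero_add] at hJJ
  nlinarith [mul_self_nonneg (x.coord 1 (J (x 0)))]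

end IsM14neg1Basis

end M14

/-- The Lie algebra `M14₋₁` (`[x₁,x₃]=x₄, [x₁,x₄]=x₆, [x₂,x₃]=x₅, [x₂,x₅]=-x₆`)
admits no integrable almost complex structure. -/
theorem M14neg1_has_no_complex_structure
    (L : Type*) [LieRing L] [LieAlgebra ℝ L]
    (x : Module.Basis (Fin 6) ℝ L)
    (h02 : ⁅x 0, x 2⁆ = x 3) (h03 : ⁅x 0, x 3⁆ = x 5)
    (h12 : ⁅x 1, x 2⁆ = x 4) (h14 : ⁅x 1, x 4⁆ = -x 5)
    (h01 : ⁅x 0, x 1⁆ = 0) (h04 : ⁅x 0, x 4⁆ = 0) (h05 : ⁅x 0, x 5⁆ = 0)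
    (h13 : ⁅x 1, x 3⁆ = 0) (h15 : ⁅x 1, x 5⁆ = 0)
    (h23 : ⁅x 2, x 3⁆ = 0) (h24 : ⁅x 2, x 4⁆ = 0) (h25 : ⁅x 2, x 5⁆ = 0)
    (h34 : ⁅x 3, x 4⁆ = 0) (h35 : ⁅x 3, x 5⁆ = 0) (h45 : ⁅x 4, x 5⁆ = 0) :
    ¬ ∃ J : L →ₗ[ℝ] L, (∀ X : L, J (J X) = -X) ∧
      (∀ X Y : L, ⁅J X, J Y⁆ - ⁅X, Y⁆ - J ⁅J X, Y⁆ - J ⁅X, J Y⁆ = 0) := by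
  rintro ⟨J, hJ⟩
  have hx := isM14neg1Basis_of_lie x h02 h03 h12 h14 h01 h04 h05 h13 h15 h23 h24 h25 h34 h35 h45
  exact hx.coord_apply_basis_five_two_ne_zero hJ (hx.coord_apply_basis_five_two_eq_zero hJ)
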